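/- arXiv:0712.2424 — 2 statements merged into one kernel-verified Lean document; each statement's English description precedes it below -/
import Mathlib

section
/- Fix integers N, ℓ with 2 ≤ ℓ ≤ N-1 and 0 < ε < 1/2. Order {1,…,ℓ-1} by a ≤_h b iff a = b or |a-(ℓ/2-ε)| > |b-(ℓ/2-ε)|, and order {1,…,N-ℓ} by a ≤_w b iff a = b or |a-((N-ℓ+1)/2-ε)| > |b-((N-ℓ+1)/2-ε)|. Let S be the set of pairs (a,b) with 1 ≤ a ≤ ℓ-1, 1 ≤ b ≤ N-ℓ, and (a,b) satisfying: a < ℓ-1 or b ≤ ⌊(N-ℓ)/2⌋ or b = N-ℓ, and also b < N-ℓ or a ≤ ⌊(ℓ-1)/2⌋ or a = ℓ-1. Then S, with the product order ((a,b) ≤ (c,d) iff a ≤_h c and b ≤_w d), is closed under componentwise join; in particular every pair of elements of S has a least upper bound in S given by (a ∨_h c, b ∨_w d). -/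
/-- The total order `≤_h` on `{1,…,ℓ-1}`: `a ≤_h b` iff `a = b` or `a` is strictly
farther from `ℓ/2 - ε` than `b`. -/
noncomputable def hLe (ℓ : ℕ) (ε : ℝ) (a b : ℕ) : Prop :=
  a = b ∨ |(a : ℝ) - ((ℓ : ℝ) / 2 - ε)| > |(b : ℝ) - ((ℓ : ℝ) / 2 - ε)|

/-- The total order `≤_w` on `{1,…,N-ℓ}`: `a ≤_w b` iff `a = b` or `a` is strictly
farther from `(N-ℓ+1)/2 - ε` than `b`. -/
noncomputable def wLe (N ℓ : ℕ) (ε : ℝ) (a b : ℕ) : Prop :=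
  a = b ∨ |(a : ℝ) - (((N : ℝ) - ℓ + 1) / 2 - ε)| > |(b : ℝ) - (((N : ℝ) - ℓ + 1) / 2 - ε)|

/-- The set of labels `[a,b]` of the poset of multiplicity-free ribbons `M(N,ℓ)`. -/
def mfSet (N ℓ : ℕ) : Set (ℕ × ℕ) :=
  {p | 1 ≤ p.1 ∧ p.1 ≤ ℓ - 1 ∧ 1 ≤ p.2 ∧ p.2 ≤ N - ℓ ∧
       (p.1 < ℓ - 1 ∨ p.2 ≤ (N - ℓ) / 2 ∨ p.2 = N - ℓ) ∧
       (p.2 < N - ℓ ∨ p.1 ≤ (ℓ - 1) / 2 ∨ p.1 = ℓ - 1)}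


/-- With `0 < ε < 1/2`, distinct naturals have distinct distances from `M/2 - ε`. -/
lemma injDist (M : ℤ) (ε : ℝ) (hε₀ : 0 < ε) (hε₁ : ε < 1 / 2) (a c : ℕ)
    (h : |(a : ℝ) - ((M : ℝ) / 2 - ε)| = |(c : ℝ) - ((M : ℝ) / 2 - ε)|) : a = c := by
  rcases abs_eq_abs.mp h with h | h
  · exact_mod_cast (by linarith : (a : ℝ) = (c : ℝ))
  · exfalso
    have hk : ((M - a - c : ℤ) : ℝ) = 2 * ε := by push_cast; linarith
    have h1 : (0 : ℤ) < M - a - c := by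
      have : (0 : ℝ) < ((M - a - c : ℤ) : ℝ) := by rw [hk]; linarith
      exact_mod_cast this
    have h2 : (M - a - c : ℤ) < 1 := by
      have : ((M - a - c : ℤ) : ℝ) < 1 := by rw [hk]; linarith
      exact_mod_cast this
    omega

/-- Within `{1,…,M-1}`, the element `M-1` is farthest from `M/2 - ε`. -/
lemma distLe (M : ℤ) (ε : ℝ) (hε₀ : 0 < ε) (a : ℕ) (h1 : 1 ≤ a) (h2 : (a : ℤ) ≤ M - 1) :
    |(a : ℝ) - ((M : ℝ) / 2 - ε)| ≤ (M : ℝ) / 2 - 1 + ε := by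
  have ha1 : (1 : ℝ) ≤ (a : ℝ) := by exact_mod_cast h1
  have ha2 : (a : ℝ) ≤ (M : ℝ) - 1 := by exact_mod_cast h2
  rw [abs_le]
  constructor <;> linarith

/-- Existence of the join of two elements with respect to the distance total preorder. -/
lemma joinEx (M : ℤ) (ε : ℝ) (hε₀ : 0 < ε) (hε₁ : ε < 1 / 2) (a c : ℕ) :
    ∃ e : ℕ, (e = a ∨ e = c) ∧
      (a = e ∨ |(a : ℝ) - ((M : ℝ) / 2 - ε)| > |(e : ℝ) - ((M : ℝ) / 2 - ε)|) ∧
      (c = e ∨ |(c : ℝ) - ((M : ℝ) / 2 - ε)| > |(e : ℝ) - ((M : ℝ) / 2 - ε)|) := by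
  by_cases hh : |(c : ℝ) - ((M : ℝ) / 2 - ε)| < |(a : ℝ) - ((M : ℝ) / 2 - ε)|
  · exact ⟨c, Or.inr rfl, Or.inr hh, Or.inl rfl⟩
  · refine ⟨a, Or.inl rfl, Or.inl rfl, ?_⟩
    rcases lt_or_eq_of_le (not_lt.mp hh) with h | h
    · exact Or.inr h
    · exact Or.inl (injDist M ε hε₀ hε₁ c a h.symm)

/-- An element below the bottom `M-1` must equal it. -/
lemma botDist (M : ℤ) (ε : ℝ) (hε₀ : 0 < ε) (a e : ℕ)
    (h1 : 1 ≤ a) (h2 : (a : ℤ) ≤ M - 1) (hE : (e : ℤ) = M - 1)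
    (h : a = e ∨ |(a : ℝ) - ((M : ℝ) / 2 - ε)| > |(e : ℝ) - ((M : ℝ) / 2 - ε)|) : a = e := by
  rcases h with h | h
  · exact h
  · exfalso
    have hle := distLe M ε hε₀ a h1 h2
    have hM : (2 : ℤ) ≤ M := by omega
    have hM' : (2 : ℝ) ≤ (M : ℝ) := by exact_mod_cast hM
    have hcastE : (e : ℝ) = (M : ℝ) - 1 := by exact_mod_cast hE
    have habs : |(e : ℝ) - ((M : ℝ) / 2 - ε)| = (M : ℝ) / 2 - 1 + ε := by
      rw [hcastE, abs_of_nonneg (by linarith)]; ring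
    rw [habs] at h
    linarith


set_option maxHeartbeats 1000000 in
/-- `mfSet N ℓ`, ordered componentwise by `≤_h` and `≤_w`, is closed under the
componentwise join: every pair of elements has a least upper bound in the set, given by
`(a ∨_h c, b ∨_w d)`. -/
theorem stmt13 (N ℓ : ℕ) (hℓ : 2 ≤ ℓ) (hN : ℓ ≤ N - 1)
    (ε : ℝ) (hε₀ : 0 < ε) (hε₁ : ε < 1 / 2)
    (a b c d : ℕ) (hab : (a, b) ∈ mfSet N ℓ) (hcd : (c, d) ∈ mfSet N ℓ) :
    ∃ e f : ℕ,
      (e = a ∨ e = c) ∧ hLe ℓ ε a e ∧ hLe ℓ ε c e ∧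
      (f = b ∨ f = d) ∧ wLe N ℓ ε b f ∧ wLe N ℓ ε d f ∧
      (e, f) ∈ mfSet N ℓ ∧
      (∀ e' f', (e', f') ∈ mfSet N ℓ →
        hLe ℓ ε a e' → hLe ℓ ε c e' → wLe N ℓ ε b f' → wLe N ℓ ε d f' →
        hLe ℓ ε e e' ∧ wLe N ℓ ε f f') := by
  simp only [mfSet, Set.mem_setOf_eq] at hab hcd
  obtain ⟨ha1, ha2, hb1, hb2, hA, hB⟩ := hab
  obtain ⟨hc1, hc2, hd1, hd2, hC, hD⟩ := hcd
  have hℓN : ℓ + 1 ≤ N := by omega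
  have hcastℓ : (((ℓ : ℤ)) : ℝ) = (ℓ : ℝ) := by push_cast; ring
  have hcastw : ((((N : ℤ) - ℓ + 1 : ℤ)) : ℝ) = (N : ℝ) - ℓ + 1 := by push_cast; ring
  obtain ⟨e, he, hae, hce⟩ := joinEx (ℓ : ℤ) ε hε₀ hε₁ a c
  obtain ⟨f, hf, hbf, hdf⟩ := joinEx ((N : ℤ) - ℓ + 1) ε hε₀ hε₁ b d
  rw [hcastℓ] at hae hce
  rw [hcastw] at hbf hdf
  have hae' : hLe ℓ ε a e := hae
  have hce' : hLe ℓ ε c e := hce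
  have hbf' : wLe N ℓ ε b f := hbf
  have hdf' : wLe N ℓ ε d f := hdf
  clear hae hce hbf hdf
  have he1 : 1 ≤ e := by rcases he with rfl | rfl <;> omega
  have he2 : e ≤ ℓ - 1 := by rcases he with rfl | rfl <;> omega
  have hf1 : 1 ≤ f := by rcases hf with rfl | rfl <;> omega
  have hf2 : f ≤ N - ℓ := by rcases hf with rfl | rfl <;> omega
  have hkeyH : e = ℓ - 1 → a = ℓ - 1 ∧ c = ℓ - 1 := by
    intro hE
    clear hA hB hC hD hbf' hdf'
    have hE' : ((e : ℕ) : ℤ) = (ℓ : ℤ) - 1 := by omega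
    have hA' : a = e := botDist (ℓ : ℤ) ε hε₀ a e ha1 (by omega) hE' (by rw [hcastℓ]; exact hae')
    have hC' : c = e := botDist (ℓ : ℤ) ε hε₀ c e hc1 (by omega) hE' (by rw [hcastℓ]; exact hce')
    omega
  have hkeyW : f = N - ℓ → b = N - ℓ ∧ d = N - ℓ := by
    intro hF
    clear hA hB hC hD hae' hce'
    have hF' : ((f : ℕ) : ℤ) = ((N : ℤ) - ℓ + 1) - 1 := by omega
    have hB' : b = f := botDist ((N : ℤ) - ℓ + 1) ε hε₀ b f hb1 (by omega) hF'
      (by rw [hcastw]; exact hbf')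
    have hD' : d = f := botDist ((N : ℤ) - ℓ + 1) ε hε₀ d f hd1 (by omega) hF'
      (by rw [hcastw]; exact hdf')
    omega
  have hmem1 : e < ℓ - 1 ∨ f ≤ (N - ℓ) / 2 ∨ f = N - ℓ := by
    clear hae' hce' hbf' hdf'
    by_cases hE : e < ℓ - 1
    · exact Or.inl hE
    · obtain ⟨haℓ, hcℓ⟩ := hkeyH (by omega)
      rcases hf with rfl | rfl
      · rcases hA with h | h
        · omega
        · exact Or.inr h
      · rcases hC with h | h
        · omega
        · exact Or.inr h
  have hmem2 : f < N - ℓ ∨ e ≤ (ℓ - 1) / 2 ∨ e = ℓ - 1 := by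
    clear hae' hce' hbf' hdf'
    by_cases hF : f < N - ℓ
    · exact Or.inl hF
    · obtain ⟨hbℓ, hdℓ⟩ := hkeyW (by omega)
      rcases he with rfl | rfl
      · rcases hB with h | h
        · omega
        · exact Or.inr h
      · rcases hD with h | h
        · omega
        · exact Or.inr h
  have hmem : (e, f) ∈ mfSet N ℓ := ⟨he1, he2, hf1, hf2, hmem1, hmem2⟩
  refine ⟨e, f, he, hae', hce', hf, hbf', hdf', hmem, ?_⟩
  intro e' f' _ h1 h2 h3 h4
  exact ⟨by rcases he with rfl | rfl <;> assumption,
         by rcases hf with rfl | rfl <;> assumption⟩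
end

section
/- Let n > m ≥ 1 and k', l' ≥ 0, and set N = m + n + k' + l'. There is no lattice word of content (n, m+1, 1^{k'+l'-1}) arising as the reading word of a semistandard filling of the ribbon (n, 1^{k'}, m, 1^{l'}); concretely: in any semistandard Young tableau of ribbon shape (n, 1^{k'}, m, 1^{l'}) whose reading word is lattice, the top row contains only 1s, and consequently the tableau contains at most n + m occurrences of entries from {1, 2} with at most m occurrences of 2, so its content cannot equal (n, m+1, 1^{k'+l'-1}). -/
/-!
The reading word starts with the last entry of the top row, which is the largest entry of that
row; a lattice word of positive letters starts with 1, so the whole top row consists of 1s.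
If the content has exactly `n` ones, no 1 occurs below the top row, so the second row starts
with an entry `≥ 2` and the last column, lying strictly below that entry, has no 2. The column
between the two rows is strictly increasing and ends at the last entry of the second row: it
holds at most one 2, and if it holds one then that last entry exceeds 2. Either way there are at
most `m` entries equal to 2.
-/

/-- The reading word (right to left, top to bottom) of a filling of the ribbon
`(n, 1^{k'}, m, 1^{l'})`, where `r1` is the top row (length `n`), `c1` the following
`k'` singleton rows, `r2` the row of length `m`, and `c2` the final `l'` singleton rows. -/
def readWord17 (r1 c1 r2 c2 : List ℕ) : List ℕ :=
  r1.reverse ++ c1 ++ r2.reverse ++ c2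

def IsLatticeWord (w : List ℕ) : Prop :=
  ∀ j i, 1 ≤ i → (w.take j).count (i + 1) ≤ (w.take j).count i

theorem IsLatticeWord.head_eq_one {a : ℕ} {w : List ℕ} (hw : IsLatticeWord (a :: w))
    (ha : 1 ≤ a) : a = 1 := by
  by_contra hne
  have h := hw 1 (a - 1) (by omega)
  rw [Nat.sub_add_cancel ha] at h
  simp [show a ≠ a - 1 by omega] at h

theorem IsLatticeWord.forall_eq_one_of_reverse_prefix {r w : List ℕ} (hlat : IsLatticeWord w)
    (hpre : r.reverse <+: w) (hrow : r.IsChain (· ≤ ·)) (hpos : ∀ x ∈ r, 1 ≤ x) :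
    ∀ x ∈ r, x = 1 := by
  obtain ⟨u, rfl⟩ := hpre
  obtain rfl | ⟨init, a, rfl⟩ := r.eq_nil_or_concat
  · simp
  have ha : a = 1 :=
    IsLatticeWord.head_eq_one (w := init.reverse ++ u) (by simpa using hlat) (hpos a (by simp))
  intro x hx
  have hxa : x ≤ a := by simpa using (List.isChain_iff_pairwise.mp hrow).rel_getLast hx
  have := hpos x hx
  omega

theorem count_eq_zero_of_isChain_lt_cons {a v : ℕ} {l : List ℕ} (hv : v ≤ a)
    (h : (a :: l).IsChain (· < ·)) : l.count v = 0 :=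
  List.count_eq_zero.mpr fun hmem => absurd (h.rel_cons hmem) (by omega)

theorem count_add_count_le_length_of_isChain_lt {c r : List ℕ} (v : ℕ)
    (hcol : (c ++ [r.getLastD 0]).IsChain (· < ·)) : c.count v + r.count v ≤ r.length := by
  by_cases hv : v ∈ c
  · obtain ⟨hc, -, hlt⟩ := List.pairwise_append.mp (List.isChain_iff_pairwise.mp hcol)
    have hlt : v < r.getLastD 0 := hlt v hv _ (List.mem_singleton_self _)
    have hc : c.count v ≤ 1 := List.nodup_iff_count_le_one.mp (hc.imp ne_of_lt) v
    obtain rfl | ⟨init, b, rfl⟩ := r.eq_nil_or_concat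
    · simp at hlt
    · rw [List.concat_eq_append, List.getLastD_concat] at hlt
      have := init.count_le_length (a := v)
      simp only [List.concat_eq_append, List.count_append, List.count_singleton, beq_iff_eq,
        hlt.ne', if_false, List.length_append, List.length_singleton]
      omega
  · simp [List.count_eq_zero.mpr hv, List.count_le_length]

theorem count_readWord17 (r1 c1 r2 c2 : List ℕ) (v : ℕ) :
    (readWord17 r1 c1 r2 c2).count v = r1.count v + c1.count v + r2.count v + c2.count v := by
  simp only [readWord17, List.count_append, List.count_reverse]

theorem stmt17_general (n m k' l' : ℕ) (hm : 1 ≤ m)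
    (r1 c1 r2 c2 : List ℕ)
    (hr1len : r1.length = n)
    (hr2len : r2.length = m)
    (hpos : ∀ x ∈ readWord17 r1 c1 r2 c2, 1 ≤ x)
    (hr1row : r1.Chain' (· ≤ ·))
    (hcol1 : (r1.getLastD 0 :: (c1 ++ [r2.getLastD 0])).Chain' (· < ·))
    (hcol2 : (r2.headD 0 :: c2).Chain' (· < ·))
    (hlat : ∀ j i, 1 ≤ i →
      ((readWord17 r1 c1 r2 c2).take j).count (i + 1) ≤
        ((readWord17 r1 c1 r2 c2).take j).count i) :
    (∀ x ∈ r1, x = 1) ∧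
    ¬((readWord17 r1 c1 r2 c2).count 1 = n ∧
      (readWord17 r1 c1 r2 c2).count 2 = m + 1 ∧
      (∀ i, 3 ≤ i → i ≤ k' + l' + 1 → (readWord17 r1 c1 r2 c2).count i = 1) ∧
      (∀ i, k' + l' + 1 < i → (readWord17 r1 c1 r2 c2).count i = 0)) := by
  have htop : ∀ x ∈ r1, x = 1 :=
    IsLatticeWord.forall_eq_one_of_reverse_prefix hlat (by simp [readWord17]) hr1row
      fun x hx => hpos x (by simp [readWord17, hx])
  refine ⟨htop, fun ⟨h1, h2, _⟩ => ?_⟩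
  have hr1_one : r1.count 1 = n := hr1len ▸ List.count_eq_length.mpr fun x hx => (htop x hx).symm
  have hr1_two : r1.count 2 = 0 := List.count_eq_zero.mpr fun h => by simpa using htop 2 h
  rw [count_readWord17] at h1 h2
  obtain ⟨b, t, rfl⟩ := List.exists_cons_of_length_pos (hr2len ▸ hm)
  have hb : 2 ≤ b := by
    have hb1 : b ≠ 1 := fun h => by simp [h] at h1; omega
    have := hpos b (by simp [readWord17])
    omega
  have hc2_two : c2.count 2 = 0 := count_eq_zero_of_isChain_lt_cons hb hcol2
  have hmid_two : c1.count 2 + (b :: t).count 2 ≤ (b :: t).length :=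
    count_add_count_le_length_of_isChain_lt 2 hcol1.tail
  omega

/-- In any semistandard filling of the ribbon `(n, 1^{k'}, m, 1^{l'})` (with `n > m ≥ 1`)
whose reading word is lattice, the top row contains only 1s, and the content of the
filling cannot equal `(n, m+1, 1^{k'+l'-1})`. -/
theorem stmt17 (n m k' l' : ℕ) (hm : 1 ≤ m) (hmn : m < n)
    (r1 c1 r2 c2 : List ℕ)
    (hr1len : r1.length = n) (hc1len : c1.length = k')
    (hr2len : r2.length = m) (hc2len : c2.length = l')
    (hpos : ∀ x ∈ readWord17 r1 c1 r2 c2, 1 ≤ x)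
    (hr1row : r1.Chain' (· ≤ ·)) (hr2row : r2.Chain' (· ≤ ·))
    (hcol1 : (r1.getLastD 0 :: (c1 ++ [r2.getLastD 0])).Chain' (· < ·))
    (hcol2 : (r2.headD 0 :: c2).Chain' (· < ·))
    (hlat : ∀ j i, 1 ≤ i →
      ((readWord17 r1 c1 r2 c2).take j).count (i + 1) ≤
        ((readWord17 r1 c1 r2 c2).take j).count i) :
    (∀ x ∈ r1, x = 1) ∧
    ¬((readWord17 r1 c1 r2 c2).count 1 = n ∧
      (readWord17 r1 c1 r2 c2).count 2 = m + 1 ∧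
      (∀ i, 3 ≤ i → i ≤ k' + l' + 1 → (readWord17 r1 c1 r2 c2).count i = 1) ∧
      (∀ i, k' + l' + 1 < i → (readWord17 r1 c1 r2 c2).count i = 0)) :=
  stmt17_general n m k' l' hm r1 c1 r2 c2 hr1len hr2len hpos hr1row hcol1 hcol2 hlat
end
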